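/- The functions h(t,x,y) = 1 - (a²/(4bg))·exp(-2b(x̄² + ȳ²)), u(t,x,y) = M·cos θ + a·ȳ·exp(-b(x̄² + ȳ²)), v(t,x,y) = M·sin θ - a·x̄·exp(-b(x̄² + ȳ²)), where x̄ = x - x₀ - Mt·cos θ and ȳ = y - y₀ - Mt·sin θ, satisfy the mass conservation equation of the two-dimensional shallow water system: ∂ₜh + ∂ₓ(hu) + ∂_y(hv) = 0, for all real constants M, a, b, g, x₀, y₀, θ with g > 0 and b ≠ 0. -/

import Mathlib

/-!
Write `X = xbar`, `Y = ybar` and `E = exp (-b (X² + Y²))`. The height `h` depends on `(t, x, y)`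
only through `X² + Y²`, so `∇h = κ (X, Y)` for a scalar `κ`, and since `(X, Y)` moves with
velocity `M (cos θ, sin θ)`, `∂ₜh = -M (cos θ, sin θ) · ∇h`. The velocity is this drift plus the
swirl `a E (Y, -X)`, which is orthogonal to `∇h` and divergence free. Hence
`∂ₜh + u ∂ₓh + v ∂_y h = 0` and `∂ₓu + ∂_y v = 0`, and the mass equation
`∂ₜh + ∂ₓ(hu) + ∂_y(hv) = (∂ₜh + u ∂ₓh + v ∂_y h) + h (∂ₓu + ∂_y v)` vanishes.
-/

noncomputable def xbar (M θ x₀ : ℝ) (t x : ℝ) : ℝ := x - x₀ - M * t * Real.cos θ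
noncomputable def ybar (M θ y₀ : ℝ) (t y : ℝ) : ℝ := y - y₀ - M * t * Real.sin θ

noncomputable def hv (M a b g θ x₀ y₀ : ℝ) (t x y : ℝ) : ℝ :=
  1 - a ^ 2 / (4 * b * g) * Real.exp (-2 * b * ((xbar M θ x₀ t x) ^ 2 + (ybar M θ y₀ t y) ^ 2))

noncomputable def uv (M a b θ x₀ y₀ : ℝ) (t x y : ℝ) : ℝ :=
  M * Real.cos θ + a * ybar M θ y₀ t y * Real.exp (-b * ((xbar M θ x₀ t x) ^ 2 + (ybar M θ y₀ t y) ^ 2))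

noncomputable def vv (M a b θ x₀ y₀ : ℝ) (t x y : ℝ) : ℝ :=
  M * Real.sin θ - a * xbar M θ x₀ t x * Real.exp (-b * ((xbar M θ x₀ t x) ^ 2 + (ybar M θ y₀ t y) ^ 2))

open Real

theorem hasDerivAt_exp_mul_sq_add_sq {f g : ℝ → ℝ} {f' g' t : ℝ} (c : ℝ)
    (hf : HasDerivAt f f' t) (hg : HasDerivAt g g' t) :
    HasDerivAt (fun s => exp (c * (f s ^ 2 + g s ^ 2)))
      (exp (c * (f t ^ 2 + g t ^ 2)) * (2 * c * (f t * f' + g t * g'))) t :=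
  (((hf.fun_pow 2).fun_add (hg.fun_pow 2)).const_mul c).exp |>.congr_deriv (by ring)

theorem hasDerivAt_one_sub_mul_exp_sq_add_sq {f g : ℝ → ℝ} {f' g' t : ℝ} (K b : ℝ)
    (hf : HasDerivAt f f' t) (hg : HasDerivAt g g' t) :
    HasDerivAt (fun s => 1 - K * exp (-2 * b * (f s ^ 2 + g s ^ 2)))
      (K * exp (-2 * b * (f t ^ 2 + g t ^ 2)) * (4 * b) * (f t * f' + g t * g')) t :=
  ((hasDerivAt_exp_mul_sq_add_sq (-2 * b) hf hg).const_mul K).const_sub 1 |>.congr_deriv (by ring)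

section Vortex

variable (M a b g θ x₀ y₀ t x y : ℝ)

theorem hasDerivAt_xbar_time :
    HasDerivAt (fun t => xbar M θ x₀ t x) (-(M * cos θ)) t :=
  (((hasDerivAt_id t).const_mul M).mul_const (cos θ)).const_sub (x - x₀) |>.congr_deriv (by ring)

theorem hasDerivAt_ybar_time :
    HasDerivAt (fun t => ybar M θ y₀ t y) (-(M * sin θ)) t :=
  (((hasDerivAt_id t).const_mul M).mul_const (sin θ)).const_sub (y - y₀) |>.congr_deriv (by ring)

theorem hasDerivAt_xbar_space : HasDerivAt (fun x => xbar M θ x₀ t x) 1 x :=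
  ((hasDerivAt_id x).sub_const x₀).sub_const _

theorem hasDerivAt_ybar_space : HasDerivAt (fun y => ybar M θ y₀ t y) 1 y :=
  ((hasDerivAt_id y).sub_const y₀).sub_const _

/-- The height is a function of `X² + Y²`; this is twice its derivative in that variable. -/
noncomputable def hvGradCoeff : ℝ :=
  a ^ 2 / (4 * b * g) * exp (-2 * b * (xbar M θ x₀ t x ^ 2 + ybar M θ y₀ t y ^ 2)) * (4 * b)

theorem hasDerivAt_hv_time :
    HasDerivAt (fun t => hv M a b g θ x₀ y₀ t x y)
      (-(hvGradCoeff M a b g θ x₀ y₀ t x y * M *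
        (cos θ * xbar M θ x₀ t x + sin θ * ybar M θ y₀ t y))) t :=
  hasDerivAt_one_sub_mul_exp_sq_add_sq _ b (hasDerivAt_xbar_time M θ x₀ t x)
    (hasDerivAt_ybar_time M θ y₀ t y) |>.congr_deriv (by rw [hvGradCoeff]; ring)

theorem hasDerivAt_hv_space_x :
    HasDerivAt (fun x => hv M a b g θ x₀ y₀ t x y)
      (hvGradCoeff M a b g θ x₀ y₀ t x y * xbar M θ x₀ t x) x :=
  hasDerivAt_one_sub_mul_exp_sq_add_sq _ b (hasDerivAt_xbar_space M θ x₀ t x)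
    (hasDerivAt_const x _) |>.congr_deriv (by rw [hvGradCoeff]; ring)

theorem hasDerivAt_hv_space_y :
    HasDerivAt (fun y => hv M a b g θ x₀ y₀ t x y)
      (hvGradCoeff M a b g θ x₀ y₀ t x y * ybar M θ y₀ t y) y :=
  hasDerivAt_one_sub_mul_exp_sq_add_sq _ b (hasDerivAt_const y _)
    (hasDerivAt_ybar_space M θ y₀ t y) |>.congr_deriv (by rw [hvGradCoeff]; ring)

theorem hasDerivAt_uv_space_x :
    HasDerivAt (fun x => uv M a b θ x₀ y₀ t x y)
      (-(2 * a * b * xbar M θ x₀ t x * ybar M θ y₀ t y *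
        exp (-b * (xbar M θ x₀ t x ^ 2 + ybar M θ y₀ t y ^ 2)))) x :=
  ((hasDerivAt_exp_mul_sq_add_sq (-b) (hasDerivAt_xbar_space M θ x₀ t x)
    (hasDerivAt_const x (ybar M θ y₀ t y))).const_mul (a * ybar M θ y₀ t y)).const_add
      (M * cos θ) |>.congr_deriv (by ring)

theorem hasDerivAt_vv_space_y :
    HasDerivAt (fun y => vv M a b θ x₀ y₀ t x y)
      (2 * a * b * xbar M θ x₀ t x * ybar M θ y₀ t y *
        exp (-b * (xbar M θ x₀ t x ^ 2 + ybar M θ y₀ t y ^ 2))) y :=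
  ((hasDerivAt_exp_mul_sq_add_sq (-b) (hasDerivAt_const y (xbar M θ x₀ t x))
    (hasDerivAt_ybar_space M θ y₀ t y)).const_mul (a * xbar M θ x₀ t x)).const_sub
      (M * sin θ) |>.congr_deriv (by ring)

theorem velocity_divergence_eq_zero :
    deriv (fun x => uv M a b θ x₀ y₀ t x y) x + deriv (fun y => vv M a b θ x₀ y₀ t x y) y = 0 := by
  rw [(hasDerivAt_uv_space_x M a b θ x₀ y₀ t x y).deriv,
    (hasDerivAt_vv_space_y M a b θ x₀ y₀ t x y).deriv]
  ring

theorem hv_materialDerivative_eq_zero :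
    deriv (fun t => hv M a b g θ x₀ y₀ t x y) t
      + uv M a b θ x₀ y₀ t x y * deriv (fun x => hv M a b g θ x₀ y₀ t x y) x
      + vv M a b θ x₀ y₀ t x y * deriv (fun y => hv M a b g θ x₀ y₀ t x y) y = 0 := by
  rw [(hasDerivAt_hv_time M a b g θ x₀ y₀ t x y).deriv,
    (hasDerivAt_hv_space_x M a b g θ x₀ y₀ t x y).deriv,
    (hasDerivAt_hv_space_y M a b g θ x₀ y₀ t x y).deriv]
  simp only [uv, vv]
  ring

end Vortex

theorem vortex_mass_conservation_general (M a b g x₀ y₀ θ : ℝ) :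
    ∀ t x y : ℝ,
      deriv (fun t' => hv M a b g θ x₀ y₀ t' x y) t
        + deriv (fun x' => hv M a b g θ x₀ y₀ t x' y * uv M a b θ x₀ y₀ t x' y) x
        + deriv (fun y' => hv M a b g θ x₀ y₀ t x y' * vv M a b θ x₀ y₀ t x y') y = 0 := by
  intro t x y
  rw [deriv_fun_mul (hasDerivAt_hv_space_x M a b g θ x₀ y₀ t x y).differentiableAt
      (hasDerivAt_uv_space_x M a b θ x₀ y₀ t x y).differentiableAt,
    deriv_fun_mul (hasDerivAt_hv_space_y M a b g θ x₀ y₀ t x y).differentiableAt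
      (hasDerivAt_vv_space_y M a b θ x₀ y₀ t x y).differentiableAt]
  linear_combination hv_materialDerivative_eq_zero M a b g θ x₀ y₀ t x y
    + hv M a b g θ x₀ y₀ t x y * velocity_divergence_eq_zero M a b θ x₀ y₀ t x y

/-- Mass conservation for the traveling-vortex solution of the 2D shallow water system. -/
theorem vortex_mass_conservation (M a b g x₀ y₀ θ : ℝ) (hg : 0 < g) (hb : b ≠ 0) :
    ∀ t x y : ℝ,
      deriv (fun t' => hv M a b g θ x₀ y₀ t' x y) t
        + deriv (fun x' => hv M a b g θ x₀ y₀ t x' y * uv M a b θ x₀ y₀ t x' y) x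
        + deriv (fun y' => hv M a b g θ x₀ y₀ t x y' * vv M a b θ x₀ y₀ t x y') y = 0 :=
  vortex_mass_conservation_general M a b g x₀ y₀ θ
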